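/- Let η^{αβ} be a constant symmetric invertible real n×n matrix, let F be a smooth solution of the associativity (WDVV-type) equations on ℝⁿ, let k ≥ 0, and let v_0, …, v_k be smooth vector-valued functions on ℝⁿ with v_0^β(x) = x^β, v_1^β = η^{βν} ∂_ν F (if k ≥ 1), and satisfying the recursion ∂_α∂_γ v_j^β = η^{νκ} ∂_α∂_γ∂_κ F ∂_ν v_{j−1}^β for all α,β,γ and all j = 2,…,k. Then for each fixed β, G = v_k^β is a symmetry characteristic of the associativity equations at F, i.e. it satisfies their linearization. -/

import Mathlib

open Finset

variable {n : ℕ}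

/-- Partial derivative of `f` in the `i`-th coordinate direction on `ℝⁿ`. -/
noncomputable def pd {n : ℕ} (i : Fin n) (f : (Fin n → ℝ) → ℝ) : (Fin n → ℝ) → ℝ :=
  fun x => fderiv ℝ f x (Pi.single i 1)

lemma pd_contDiff {f : (Fin n → ℝ) → ℝ} (hf : ContDiff ℝ (⊤ : ℕ∞) f) (i : Fin n) :
    ContDiff ℝ (⊤ : ℕ∞) (pd i f) := by
  have h : ContDiff ℝ (⊤ : ℕ∞) (fderiv ℝ f) := hf.fderiv_right (by simp)
  exact h.clm_apply contDiff_const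

lemma pd_sum {ι : Type*} (s : Finset ι) (f : ι → (Fin n → ℝ) → ℝ) (i : Fin n) (x : Fin n → ℝ)
    (hf : ∀ j ∈ s, DifferentiableAt ℝ (f j) x) :
    pd i (fun y => ∑ j ∈ s, f j y) x = ∑ j ∈ s, pd i (f j) x := by
  unfold pd
  rw [fderiv_fun_sum hf]
  simp

lemma pd_mul {f g : (Fin n → ℝ) → ℝ} (i : Fin n) (x : Fin n → ℝ)
    (hf : DifferentiableAt ℝ f x) (hg : DifferentiableAt ℝ g x) :
    pd i (fun y => f y * g y) x = pd i f x * g x + f x * pd i g x := by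
  unfold pd
  rw [fderiv_fun_mul hf hg]
  simp [mul_comm]
  ring

lemma pd_const_mul {f : (Fin n → ℝ) → ℝ} (c : ℝ) (i : Fin n) (x : Fin n → ℝ)
    (hf : DifferentiableAt ℝ f x) :
    pd i (fun y => c * f y) x = c * pd i f x := by
  unfold pd
  rw [fderiv_const_mul hf]
  simp

lemma pd_coord (i β : Fin n) (x : Fin n → ℝ) :
    pd i (fun y : Fin n → ℝ => y β) x = if β = i then 1 else 0 := by
  unfold pd
  have : (fun y : Fin n → ℝ => y β) = (ContinuousLinearMap.proj (R := ℝ) (φ := fun _ : Fin n => ℝ) β) := rfl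
  rw [this, ContinuousLinearMap.fderiv]
  simp [Pi.single_apply]

lemma pd_const (c : ℝ) (i : Fin n) : pd i (fun _ : Fin n → ℝ => c) = fun _ => 0 := by
  funext x; unfold pd; simp

/-- derivative of a double sum of products -/
lemma pd_sum_sum_mul (i : Fin n) (x : Fin n → ℝ) (c : Fin n → Fin n → ℝ)
    (A B : Fin n → Fin n → (Fin n → ℝ) → ℝ)
    (hA : ∀ p q, ContDiff ℝ (⊤ : ℕ∞) (A p q)) (hB : ∀ p q, ContDiff ℝ (⊤ : ℕ∞) (B p q)) :
    pd i (fun y => ∑ p, ∑ q, c p q * A p q y * B p q y) x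
      = ∑ p, ∑ q, c p q *
          (pd i (A p q) x * B p q x + A p q x * pd i (B p q) x) := by
  have dA : ∀ p q (y : Fin n → ℝ), DifferentiableAt ℝ (A p q) y :=
    fun p q y => ((hA p q).differentiable (by simp)).differentiableAt
  have dB : ∀ p q (y : Fin n → ℝ), DifferentiableAt ℝ (B p q) y :=
    fun p q y => ((hB p q).differentiable (by simp)).differentiableAt
  rw [pd_sum _ _ i x (fun p _ => by
    exact DifferentiableAt.fun_sum fun q _ => (((dA p q x).const_mul _).mul (dB p q x)))]
  refine Finset.sum_congr rfl fun p _ => ?_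
  rw [pd_sum _ _ i x (fun q _ => (((dA p q x).const_mul _).fun_mul (dB p q x)))]
  refine Finset.sum_congr rfl fun q _ => ?_
  have e : (fun y => c p q * A p q y * B p q y)
      = fun y => (fun z => c p q * A p q z) y * B p q y := rfl
  rw [e, pd_mul i x ((dA p q x).const_mul _) (dB p q x),
    pd_const_mul _ i x (dA p q x)]
  ring

lemma pd_eq_snd {f : (Fin n → ℝ) → ℝ} (hf : ContDiff ℝ (⊤ : ℕ∞) f) (i j : Fin n) (x : Fin n → ℝ) :
    pd i (pd j f) x = fderiv ℝ (fderiv ℝ f) x (Pi.single i 1) (Pi.single j 1) := by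
  have hdf : DifferentiableAt ℝ (fderiv ℝ f) x :=
    ((hf.fderiv_right (m := (⊤ : ℕ∞)) (by simp)).differentiable (by simp)).differentiableAt
  unfold pd
  rw [fderiv_clm_apply hdf (differentiableAt_const _)]
  simp

lemma pd_comm {f : (Fin n → ℝ) → ℝ} (hf : ContDiff ℝ (⊤ : ℕ∞) f) (i j : Fin n) :
    pd i (pd j f) = pd j (pd i f) := by
  funext x
  rw [pd_eq_snd hf, pd_eq_snd hf]
  exact (hf.contDiffAt.isSymmSndFDerivAt (by rw [minSmoothness_of_isRCLikeNormedField]; exact WithTop.coe_le_coe.mpr (le_top : (2 : ℕ∞) ≤ ⊤))) _ _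

lemma pd3_cyc {f : (Fin n → ℝ) → ℝ} (hf : ContDiff ℝ (⊤ : ℕ∞) f) (a b c : Fin n) :
    pd a (pd b (pd c f)) = pd c (pd a (pd b f)) := by
  calc pd a (pd b (pd c f)) = pd a (pd c (pd b f)) := congrArg _ (pd_comm hf b c)
    _ = pd c (pd a (pd b f)) := pd_comm (pd_contDiff hf b) a c

lemma pd4_cyc {F : (Fin n → ℝ) → ℝ} (hF : ContDiff ℝ (⊤ : ℕ∞) F) (a b c d : Fin n) :
    pd a (pd b (pd c (pd d F))) = pd d (pd a (pd b (pd c F))) := by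
  calc pd a (pd b (pd c (pd d F)))
      = pd a (pd b (pd d (pd c F))) := congrArg _ (congrArg _ (pd_comm hF c d))
    _ = pd a (pd d (pd b (pd c F))) := congrArg _ (pd_comm (pd_contDiff hF c) b d)
    _ = pd d (pd a (pd b (pd c F))) := pd_comm (pd_contDiff (pd_contDiff hF c) b) a d

lemma pd4_14 {F : (Fin n → ℝ) → ℝ} (hF : ContDiff ℝ (⊤ : ℕ∞) F) (a b c d : Fin n) :
    pd a (pd b (pd c (pd d F))) = pd d (pd b (pd c (pd a F))) := by
  calc pd a (pd b (pd c (pd d F)))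
      = pd d (pd a (pd b (pd c F))) := pd4_cyc hF a b c d
    _ = pd d (pd b (pd a (pd c F))) := congrArg _ (pd_comm (pd_contDiff hF c) a b)
    _ = pd d (pd b (pd c (pd a F))) := congrArg _ (congrArg _ (pd_comm hF a c))
lemma sum_swap_pairs (g : Fin n → Fin n → Fin n → Fin n → ℝ) :
    ∑ a, ∑ b, ∑ c, ∑ d, g a b c d = ∑ c, ∑ d, ∑ a, ∑ b, g a b c d := by
  have h1 : ∑ a, ∑ b, ∑ c, ∑ d, g a b c d = ∑ a, ∑ c, ∑ b, ∑ d, g a b c d :=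
    Finset.sum_congr rfl fun a _ => Finset.sum_comm
  have h2 : ∑ a, ∑ c, ∑ b, ∑ d, g a b c d = ∑ c, ∑ a, ∑ b, ∑ d, g a b c d :=
    Finset.sum_comm
  have h3 : ∑ c, ∑ a, ∑ b, ∑ d, g a b c d = ∑ c, ∑ a, ∑ d, ∑ b, g a b c d :=
    Finset.sum_congr rfl fun c _ => Finset.sum_congr rfl fun a _ => Finset.sum_comm
  have h4 : ∑ c, ∑ a, ∑ d, ∑ b, g a b c d = ∑ c, ∑ d, ∑ a, ∑ b, g a b c d :=
    Finset.sum_congr rfl fun c _ => Finset.sum_comm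
  rw [h1, h2, h3, h4]

lemma sum6_reorder₁ (g : Fin n → Fin n → Fin n → Fin n → Fin n → Fin n → ℝ) :
    ∑ ν, ∑ κ, ∑ δ, ∑ γ, ∑ μ, ∑ l, g ν κ δ γ μ l
      = ∑ μ, ∑ l, ∑ κ, ∑ ν, ∑ δ, ∑ γ, g ν κ δ γ μ l := by
  have h1 : ∑ ν, ∑ κ, ∑ δ, ∑ γ, ∑ μ, ∑ l, g ν κ δ γ μ l
      = ∑ ν, ∑ κ, ∑ μ, ∑ l, ∑ δ, ∑ γ, g ν κ δ γ μ l :=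
    Finset.sum_congr rfl fun ν _ => Finset.sum_congr rfl fun κ _ =>
      sum_swap_pairs (fun δ γ μ l => g ν κ δ γ μ l)
  have h2 : ∑ ν, ∑ κ, ∑ μ, ∑ l, ∑ δ, ∑ γ, g ν κ δ γ μ l
      = ∑ μ, ∑ l, ∑ ν, ∑ κ, ∑ δ, ∑ γ, g ν κ δ γ μ l :=
    sum_swap_pairs (fun ν κ μ l => ∑ δ, ∑ γ, g ν κ δ γ μ l)
  have h3 : ∑ μ, ∑ l, ∑ ν, ∑ κ, ∑ δ, ∑ γ, g ν κ δ γ μ l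
      = ∑ μ, ∑ l, ∑ κ, ∑ ν, ∑ δ, ∑ γ, g ν κ δ γ μ l :=
    Finset.sum_congr rfl fun μ _ => Finset.sum_congr rfl fun l _ => Finset.sum_comm
  rw [h1, h2, h3]

lemma sum6_reorder₂ (g : Fin n → Fin n → Fin n → Fin n → Fin n → Fin n → ℝ) :
    ∑ ν, ∑ κ, ∑ δ, ∑ γ, ∑ μ, ∑ l, g ν κ δ γ μ l
      = ∑ μ, ∑ l, ∑ δ, ∑ γ, ∑ ν, ∑ κ, g ν κ δ γ μ l := by
  have h1 : ∑ ν, ∑ κ, ∑ δ, ∑ γ, ∑ μ, ∑ l, g ν κ δ γ μ l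
      = ∑ ν, ∑ κ, ∑ μ, ∑ l, ∑ δ, ∑ γ, g ν κ δ γ μ l :=
    Finset.sum_congr rfl fun ν _ => Finset.sum_congr rfl fun κ _ =>
      sum_swap_pairs (fun δ γ μ l => g ν κ δ γ μ l)
  have h2 : ∑ ν, ∑ κ, ∑ μ, ∑ l, ∑ δ, ∑ γ, g ν κ δ γ μ l
      = ∑ μ, ∑ l, ∑ ν, ∑ κ, ∑ δ, ∑ γ, g ν κ δ γ μ l :=
    sum_swap_pairs (fun ν κ μ l => ∑ δ, ∑ γ, g ν κ δ γ μ l)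
  have h3 : ∑ μ, ∑ l, ∑ ν, ∑ κ, ∑ δ, ∑ γ, g ν κ δ γ μ l
      = ∑ μ, ∑ l, ∑ δ, ∑ γ, ∑ ν, ∑ κ, g ν κ δ γ μ l :=
    Finset.sum_congr rfl fun μ _ => Finset.sum_congr rfl fun l _ =>
      sum_swap_pairs (fun ν κ δ γ => g ν κ δ γ μ l)
  rw [h1, h2, h3]
def Cmat (f3 : Fin n → Fin n → Fin n → ℝ) (e : Fin n) : Matrix (Fin n) (Fin n) ℝ :=
  Matrix.of fun p r => f3 p e r

lemma chain2_apply (η : Matrix (Fin n) (Fin n) ℝ) (f3 : Fin n → Fin n → Fin n → ℝ)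
    (b c a d : Fin n) :
    (Cmat f3 b * η * Cmat f3 c) a d = ∑ p, ∑ q, f3 a b p * η p q * f3 q c d := by
  rw [Matrix.mul_apply]
  rw [Finset.sum_comm]
  refine Finset.sum_congr rfl fun p _ => ?_
  rw [Matrix.mul_apply, Finset.sum_mul]
  refine Finset.sum_congr rfl fun q _ => ?_
  simp [Cmat, Matrix.mul_apply]

lemma chain3_apply (η : Matrix (Fin n) (Fin n) ℝ) (f3 : Fin n → Fin n → Fin n → ℝ)
    (b l c a d : Fin n) :
    (Cmat f3 b * η * Cmat f3 l * η * Cmat f3 c) a d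
      = ∑ p, ∑ q, ∑ r, ∑ s, f3 a b p * η p q * f3 q l r * η r s * f3 s c d := by
  have h : Cmat f3 b * η * Cmat f3 l * η * Cmat f3 c
      = (Cmat f3 b * η) * ((Cmat f3 l * η * Cmat f3 c)) := by
    simp only [Matrix.mul_assoc]
  rw [h, Matrix.mul_apply]
  rw [Finset.sum_comm]
  refine Finset.sum_congr rfl fun p _ => ?_
  rw [Matrix.mul_apply, Finset.sum_mul]
  refine Finset.sum_congr rfl fun q _ => ?_
  rw [chain2_apply, Finset.mul_sum]
  refine Finset.sum_congr rfl fun r _ => ?_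
  rw [Finset.mul_sum]
  refine Finset.sum_congr rfl fun s _ => ?_
  simp [Cmat, Matrix.mul_apply]
  ring

lemma comm_of_W (η : Matrix (Fin n) (Fin n) ℝ) (f3 : Fin n → Fin n → Fin n → ℝ)
    (W : ∀ a b c d, ∑ p, ∑ q, f3 a b p * η p q * f3 q c d
        = ∑ p, ∑ q, f3 a c p * η p q * f3 q b d) (b c : Fin n) :
    Cmat f3 b * η * Cmat f3 c = Cmat f3 c * η * Cmat f3 b := by
  ext a d
  rw [chain2_apply, chain2_apply]
  exact W a b c d

lemma Pswap (η : Matrix (Fin n) (Fin n) ℝ) (f3 : Fin n → Fin n → Fin n → ℝ)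
    (W : ∀ a b c d, ∑ p, ∑ q, f3 a b p * η p q * f3 q c d
        = ∑ p, ∑ q, f3 a c p * η p q * f3 q b d) (b l c : Fin n) :
    Cmat f3 b * η * Cmat f3 l * η * Cmat f3 c
      = Cmat f3 c * η * Cmat f3 l * η * Cmat f3 b := by
  have h1 := comm_of_W η f3 W b l
  have h2 := comm_of_W η f3 W b c
  have h3 := comm_of_W η f3 W l c
  calc Cmat f3 b * η * Cmat f3 l * η * Cmat f3 c
      = (Cmat f3 b * η * Cmat f3 l) * η * Cmat f3 c := by simp only [Matrix.mul_assoc]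
    _ = (Cmat f3 l * η * Cmat f3 b) * η * Cmat f3 c := by rw [h1]
    _ = Cmat f3 l * η * (Cmat f3 b * η * Cmat f3 c) := by simp only [Matrix.mul_assoc]
    _ = Cmat f3 l * η * (Cmat f3 c * η * Cmat f3 b) := by rw [h2]
    _ = (Cmat f3 l * η * Cmat f3 c) * η * Cmat f3 b := by simp only [Matrix.mul_assoc]
    _ = (Cmat f3 c * η * Cmat f3 l) * η * Cmat f3 b := by rw [h3]
    _ = Cmat f3 c * η * Cmat f3 l * η * Cmat f3 b := by simp only [Matrix.mul_assoc]
lemma core (η : Matrix (Fin n) (Fin n) ℝ)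
    (hηs : ∀ p q, η p q = η q p)
    (f3 : Fin n → Fin n → Fin n → ℝ) (f4 : Fin n → Fin n → Fin n → Fin n → ℝ)
    (w u : Fin n → ℝ)
    (h3bc : ∀ a b c, f3 a b c = f3 a c b)
    (h3cyc : ∀ a b c, f3 a b c = f3 b c a)
    (h4_14 : ∀ a b c d, f4 a b c d = f4 d b c a)
    (h4cyc : ∀ a b c d, f4 a b c d = f4 d a b c)
    (W : ∀ a b c d, ∑ p, ∑ q, f3 a b p * η p q * f3 q c d
        = ∑ p, ∑ q, f3 a c p * η p q * f3 q b d)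
    (W4 : ∀ e a b c d,
      ∑ p, ∑ q, (f4 e a b p * η p q * f3 q c d + f3 a b p * η p q * f4 e q c d)
        = ∑ p, ∑ q, (f4 e a c p * η p q * f3 q b d + f3 a c p * η p q * f4 e q b d))
    (G3 : Fin n → Fin n → Fin n → ℝ)
    (hG : ∀ a b c, G3 a b c = ∑ ν, ∑ κ, η ν κ *
        (f4 c a b κ * w ν + f3 a b κ * (∑ μ, ∑ l, η μ l * f3 ν c l * u μ)))
    (a b c d : Fin n) :
    (∑ δ, ∑ γ, G3 a b δ * η δ γ * f3 γ c d) + (∑ δ, ∑ γ, f3 a b δ * η δ γ * G3 c d γ)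
      = (∑ δ, ∑ γ, G3 a c δ * η δ γ * f3 γ b d)
        + (∑ δ, ∑ γ, f3 a c δ * η δ γ * G3 b d γ) := by
  have hT1 : ∀ b' c', (∑ δ, ∑ γ, G3 a b' δ * η δ γ * f3 γ c' d)
      = (∑ ν, ∑ κ, η ν κ * w ν * (∑ δ, ∑ γ, f4 κ a b' δ * η δ γ * f3 γ c' d))
        + (∑ μ, ∑ l, η μ l * u μ *
            ((Cmat f3 b' * η * Cmat f3 l * η * Cmat f3 c') a d)) := by
    intro b' c'
    have e1 : (∑ δ, ∑ γ, G3 a b' δ * η δ γ * f3 γ c' d)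
        = ∑ δ, ∑ γ, ∑ ν, ∑ κ, (η ν κ *
            (f4 δ a b' κ * w ν + f3 a b' κ * (∑ μ, ∑ l, η μ l * f3 ν δ l * u μ)))
            * η δ γ * f3 γ c' d := by
      refine Finset.sum_congr rfl fun δ _ => Finset.sum_congr rfl fun γ _ => ?_
      rw [hG]
      simp only [Finset.sum_mul]
    rw [e1, sum_swap_pairs]
    simp only [mul_add, add_mul, Finset.sum_add_distrib]
    congr 1
    · refine Finset.sum_congr rfl fun ν _ => Finset.sum_congr rfl fun κ _ => ?_
      rw [Finset.mul_sum]
      refine Finset.sum_congr rfl fun δ _ => ?_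
      rw [Finset.mul_sum]
      refine Finset.sum_congr rfl fun γ _ => ?_
      rw [h4_14 κ a b' δ]
      ring
    · simp only [Finset.mul_sum, Finset.sum_mul]
      rw [sum6_reorder₁]
      simp only [chain3_apply, Finset.mul_sum]
      refine Finset.sum_congr rfl fun μ _ => Finset.sum_congr rfl fun l _ => ?_
      refine Finset.sum_congr rfl fun κ _ => Finset.sum_congr rfl fun ν _ => ?_
      refine Finset.sum_congr rfl fun δ _ => Finset.sum_congr rfl fun γ _ => ?_
      rw [hηs ν κ, h3bc ν δ l]
      ring
  have hT2 : ∀ b' c', (∑ δ, ∑ γ, f3 a b' δ * η δ γ * G3 c' d γ)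
      = (∑ ν, ∑ κ, η ν κ * w ν * (∑ δ, ∑ γ, f3 a b' δ * η δ γ * f4 κ γ c' d))
        + (∑ μ, ∑ l, η μ l * u μ *
            ((Cmat f3 b' * η * Cmat f3 l * η * Cmat f3 c') a d)) := by
    intro b' c'
    have e1 : (∑ δ, ∑ γ, f3 a b' δ * η δ γ * G3 c' d γ)
        = ∑ δ, ∑ γ, ∑ ν, ∑ κ, f3 a b' δ * η δ γ * (η ν κ *
            (f4 γ c' d κ * w ν + f3 c' d κ * (∑ μ, ∑ l, η μ l * f3 ν γ l * u μ))) := by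
      refine Finset.sum_congr rfl fun δ _ => Finset.sum_congr rfl fun γ _ => ?_
      rw [hG]
      simp only [Finset.mul_sum]
    rw [e1, sum_swap_pairs]
    simp only [mul_add, add_mul, Finset.sum_add_distrib]
    congr 1
    · refine Finset.sum_congr rfl fun ν _ => Finset.sum_congr rfl fun κ _ => ?_
      rw [Finset.mul_sum]
      refine Finset.sum_congr rfl fun δ _ => ?_
      rw [Finset.mul_sum]
      refine Finset.sum_congr rfl fun γ _ => ?_
      rw [h4cyc γ c' d κ]
      ring
    · simp only [Finset.mul_sum, Finset.sum_mul]
      rw [sum6_reorder₂]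
      simp only [chain3_apply, Finset.mul_sum]
      refine Finset.sum_congr rfl fun μ _ => Finset.sum_congr rfl fun l _ => ?_
      refine Finset.sum_congr rfl fun δ _ => Finset.sum_congr rfl fun γ _ => ?_
      refine Finset.sum_congr rfl fun ν _ => Finset.sum_congr rfl fun κ _ => ?_
      rw [h3cyc ν γ l, show f3 c' d κ = f3 κ c' d from (h3cyc κ c' d).symm]
      ring
  have hsum : ∀ b' c',
      (∑ δ, ∑ γ, G3 a b' δ * η δ γ * f3 γ c' d)
        + (∑ δ, ∑ γ, f3 a b' δ * η δ γ * G3 c' d γ)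
      = (∑ ν, ∑ κ, η ν κ * w ν * (∑ δ, ∑ γ,
            (f4 κ a b' δ * η δ γ * f3 γ c' d + f3 a b' δ * η δ γ * f4 κ γ c' d)))
        + (∑ μ, ∑ l, η μ l * u μ *
            ((Cmat f3 b' * η * Cmat f3 l * η * Cmat f3 c') a d))
        + (∑ μ, ∑ l, η μ l * u μ *
            ((Cmat f3 b' * η * Cmat f3 l * η * Cmat f3 c') a d)) := by
    intro b' c'
    rw [hT1, hT2]
    have key : (∑ ν, ∑ κ, η ν κ * w ν * (∑ δ, ∑ γ, f4 κ a b' δ * η δ γ * f3 γ c' d))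
        + (∑ ν, ∑ κ, η ν κ * w ν * (∑ δ, ∑ γ, f3 a b' δ * η δ γ * f4 κ γ c' d))
      = ∑ ν, ∑ κ, η ν κ * w ν * (∑ δ, ∑ γ,
            (f4 κ a b' δ * η δ γ * f3 γ c' d + f3 a b' δ * η δ γ * f4 κ γ c' d)) := by
      rw [← Finset.sum_add_distrib]
      refine Finset.sum_congr rfl fun ν _ => ?_
      rw [← Finset.sum_add_distrib]
      refine Finset.sum_congr rfl fun κ _ => ?_
      rw [← mul_add]
      congr 1
      rw [← Finset.sum_add_distrib]
      exact Finset.sum_congr rfl fun δ _ => Finset.sum_add_distrib.symm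
    rw [← key]
    ring
  have hXsymm : (∑ ν, ∑ κ, η ν κ * w ν * (∑ δ, ∑ γ,
        (f4 κ a b δ * η δ γ * f3 γ c d + f3 a b δ * η δ γ * f4 κ γ c d)))
      = (∑ ν, ∑ κ, η ν κ * w ν * (∑ δ, ∑ γ,
        (f4 κ a c δ * η δ γ * f3 γ b d + f3 a c δ * η δ γ * f4 κ γ b d))) := by
    refine Finset.sum_congr rfl fun ν _ => Finset.sum_congr rfl fun κ _ => ?_
    rw [W4 κ a b c d]
  have hYsymm : (∑ μ, ∑ l, η μ l * u μ *
        ((Cmat f3 b * η * Cmat f3 l * η * Cmat f3 c) a d))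
      = (∑ μ, ∑ l, η μ l * u μ *
        ((Cmat f3 c * η * Cmat f3 l * η * Cmat f3 b) a d)) := by
    refine Finset.sum_congr rfl fun μ _ => Finset.sum_congr rfl fun l _ => ?_
    rw [Pswap η f3 W b l c]
  rw [hsum b c, hsum c b, hXsymm, hYsymm]

/-- the nonlocal potentials `v_k^β` obtained from the recursion
`∂_α∂_γ v_j^β = η^{νκ} ∂_α∂_γ∂_κ F ∂_ν v_{j−1}^β`, with `v_0^β = x^β` and
`v_1^β = η^{βν} ∂_ν F`, are symmetry characteristics of the associativity equations. -/
theorem v_hierarchy_is_symmetry_of_wdvv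
    {n : ℕ} (hn : 1 ≤ n) (k : ℕ)
    (η : Matrix (Fin n) (Fin n) ℝ)
    (hηsymm : ∀ α β, η α β = η β α)
    (hηinv : IsUnit η.det)
    (F : (Fin n → ℝ) → ℝ)
    (v : ℕ → Fin n → (Fin n → ℝ) → ℝ)
    (hF : ContDiff ℝ (⊤ : ℕ∞) F)
    (hv : ∀ j ≤ k, ∀ β, ContDiff ℝ (⊤ : ℕ∞) (v j β))
    (hWDVV : ∀ α β ν ρ, ∀ x : Fin n → ℝ,
      ∑ δ, ∑ γ, pd α (pd β (pd δ F)) x * η δ γ * pd γ (pd ν (pd ρ F)) x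
        = ∑ δ, ∑ γ, pd α (pd ν (pd δ F)) x * η δ γ * pd γ (pd β (pd ρ F)) x)
    (hv0 : ∀ β, ∀ x : Fin n → ℝ, v 0 β x = x β)
    (hv1 : 1 ≤ k → ∀ β, ∀ x : Fin n → ℝ, v 1 β x = ∑ ν, η β ν * pd ν F x)
    (hvrec : ∀ j, 2 ≤ j → j ≤ k → ∀ α β γ, ∀ x : Fin n → ℝ,
      pd α (pd γ (v j β)) x
        = ∑ ν, ∑ κ, η ν κ * pd α (pd γ (pd κ F)) x * pd ν (v (j - 1) β) x) :
    ∀ β, ∀ α' β' ν' ρ', ∀ x : Fin n → ℝ,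
      (∑ δ, ∑ γ, pd α' (pd β' (pd δ (v k β))) x * η δ γ * pd γ (pd ν' (pd ρ' F)) x)
        + (∑ δ, ∑ γ, pd α' (pd β' (pd δ F)) x * η δ γ * pd γ (pd ν' (pd ρ' (v k β))) x)
      = (∑ δ, ∑ γ, pd α' (pd ν' (pd δ (v k β))) x * η δ γ * pd γ (pd β' (pd ρ' F)) x)
        + (∑ δ, ∑ γ, pd α' (pd ν' (pd δ F)) x * η δ γ * pd γ (pd β' (pd ρ' (v k β))) x) := by
  classical
  intro β α' β' ν' ρ' x
  by_cases hk0 : k = 0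
  · subst hk0
    have hz : ∀ p q r : Fin n, pd p (pd q (pd r (v 0 β))) x = 0 := by
      intro p q r
      have h1 : pd r (v 0 β) = fun _ => if β = r then (1:ℝ) else 0 := by
        rw [show v 0 β = fun y => y β from funext (hv0 β)]
        exact funext fun y => pd_coord r β y
      rw [h1, pd_const, pd_const]
    simp only [hz, zero_mul, mul_zero, Finset.sum_const_zero, add_zero, zero_add]
  · have h1k : 1 ≤ k := Nat.one_le_iff_ne_zero.mpr hk0
    have hF1 : ∀ c, ContDiff ℝ (⊤ : ℕ∞) (pd c F) := fun c => pd_contDiff hF c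
    have hF2 : ∀ b c, ContDiff ℝ (⊤ : ℕ∞) (pd b (pd c F)) := fun b c => pd_contDiff (hF1 c) b
    have hF3 : ∀ a b c, ContDiff ℝ (⊤ : ℕ∞) (pd a (pd b (pd c F))) :=
      fun a b c => pd_contDiff (hF2 b c) a
    have hvk : ContDiff ℝ (⊤ : ℕ∞) (v k β) := hv k le_rfl β
    have hvk1 : ContDiff ℝ (⊤ : ℕ∞) (v (k-1) β) := hv (k-1) (by omega) β
    -- the recursion holds also at level 1
    have hrec : ∀ j, 1 ≤ j → j ≤ k → ∀ (a c : Fin n) (y : Fin n → ℝ),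
        pd a (pd c (v j β)) y
          = ∑ ν, ∑ κ, η ν κ * pd a (pd c (pd κ F)) y * pd ν (v (j - 1) β) y := by
      intro j hj1 hjk a c y
      rcases Nat.lt_or_ge j 2 with hj2 | hj2
      · have hj : j = 1 := by omega
        subst hj
        have hv1fun : v 1 β = fun z => ∑ ν, η β ν * pd ν F z := funext (hv1 h1k β)
        have s1 : pd c (v 1 β) = fun z => ∑ ν, η β ν * pd c (pd ν F) z := by
          funext z
          rw [hv1fun, pd_sum _ _ c z (fun ν _ =>
            (((hF1 ν).differentiable (by simp)) z).const_mul _)]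
          exact Finset.sum_congr rfl fun ν _ =>
            pd_const_mul _ c z (((hF1 ν).differentiable (by simp)) z)
        have s2 : pd a (pd c (v 1 β)) y = ∑ ν, η β ν * pd a (pd c (pd ν F)) y := by
          rw [s1, pd_sum _ _ a y (fun ν _ =>
            (((hF2 c ν).differentiable (by simp)) y).const_mul _)]
          exact Finset.sum_congr rfl fun ν _ =>
            pd_const_mul _ a y (((hF2 c ν).differentiable (by simp)) y)
        have hcoord : ∀ ν : Fin n, pd ν (v (1 - 1) β) y = if β = ν then 1 else 0 := by
          intro ν
          show pd ν (v 0 β) y = _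
          rw [show v 0 β = fun z => z β from funext (hv0 β)]
          exact pd_coord ν β y
        have hR : ∑ ν, ∑ κ, η ν κ * pd a (pd c (pd κ F)) y * pd ν (v (1 - 1) β) y
            = ∑ κ, η β κ * pd a (pd c (pd κ F)) y := by
          calc ∑ ν, ∑ κ, η ν κ * pd a (pd c (pd κ F)) y * pd ν (v (1 - 1) β) y
              = ∑ ν, if β = ν then ∑ κ, η ν κ * pd a (pd c (pd κ F)) y else 0 := by
                refine Finset.sum_congr rfl fun ν _ => ?_
                by_cases h : β = ν
                · simp only [hcoord ν, if_pos h, mul_one]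
                · simp only [hcoord ν, if_neg h, mul_zero, Finset.sum_const_zero]
            _ = ∑ κ, η β κ * pd a (pd c (pd κ F)) y := by
                simp
        rw [s2, hR]
      · exact hvrec j hj2 hjk a β c y
    -- third derivatives of v k
    have hGq : ∀ a b c : Fin n, pd c (pd a (pd b (v k β))) x
        = ∑ ν, ∑ κ, η ν κ * (pd c (pd a (pd b (pd κ F))) x * pd ν (v (k-1) β) x
            + pd a (pd b (pd κ F)) x * pd c (pd ν (v (k-1) β)) x) := by
      intro a b c
      have hfun : pd a (pd b (v k β)) = fun y => ∑ ν, ∑ κ,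
          η ν κ * pd a (pd b (pd κ F)) y * pd ν (v (k-1) β) y :=
        funext fun y => hrec k h1k le_rfl a b y
      rw [hfun]
      exact pd_sum_sum_mul c x η (fun ν κ => pd a (pd b (pd κ F)))
        (fun ν κ => pd ν (v (k-1) β)) (fun ν κ => hF3 a b κ)
        (fun ν κ => pd_contDiff hvk1 ν)
    -- second derivatives of v (k-1)
    have hw2 : ∀ c ν : Fin n, pd c (pd ν (v (k-1) β)) x
        = ∑ μ, ∑ l, η μ l * pd ν (pd c (pd l F)) x *
            (if 2 ≤ k then pd μ (v (k-2) β) x else 0) := by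
      intro c ν
      by_cases h2k : 2 ≤ k
      · rw [hrec (k-1) (by omega) (by omega) c ν x]
        refine Finset.sum_congr rfl fun μ _ => Finset.sum_congr rfl fun l _ => ?_
        rw [show k - 1 - 1 = k - 2 from by omega,
          congrFun (pd_comm (hF1 l) c ν) x, if_pos h2k]
      · have hk1 : k = 1 := by omega
        have hc : pd ν (v (k-1) β) = fun _ => if β = ν then (1:ℝ) else 0 := by
          subst hk1
          rw [show v (1-1) β = fun y => y β from funext (hv0 β)]
          exact funext fun y => pd_coord ν β y
        rw [hc, pd_const]
        simp [h2k]
    -- differentiated WDVV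
    have hW4 : ∀ e a b c d : Fin n,
        ∑ p, ∑ q, (pd e (pd a (pd b (pd p F))) x * η p q * pd q (pd c (pd d F)) x
            + pd a (pd b (pd p F)) x * η p q * pd e (pd q (pd c (pd d F))) x)
          = ∑ p, ∑ q, (pd e (pd a (pd c (pd p F))) x * η p q * pd q (pd b (pd d F)) x
            + pd a (pd c (pd p F)) x * η p q * pd e (pd q (pd b (pd d F))) x) := by
      intro e a b c d
      have hfun : (fun y => ∑ p, ∑ q, η p q * pd a (pd b (pd p F)) y * pd q (pd c (pd d F)) y)
          = (fun y => ∑ p, ∑ q, η p q * pd a (pd c (pd p F)) y * pd q (pd b (pd d F)) y) := by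
        funext y
        calc ∑ p, ∑ q, η p q * pd a (pd b (pd p F)) y * pd q (pd c (pd d F)) y
            = ∑ p, ∑ q, pd a (pd b (pd p F)) y * η p q * pd q (pd c (pd d F)) y :=
              Finset.sum_congr rfl fun p _ => Finset.sum_congr rfl fun q _ => by ring
          _ = ∑ p, ∑ q, pd a (pd c (pd p F)) y * η p q * pd q (pd b (pd d F)) y :=
              hWDVV a b c d y
          _ = ∑ p, ∑ q, η p q * pd a (pd c (pd p F)) y * pd q (pd b (pd d F)) y :=
              Finset.sum_congr rfl fun p _ => Finset.sum_congr rfl fun q _ => by ring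
      have hL := pd_sum_sum_mul e x η (fun p q => pd a (pd b (pd p F)))
        (fun p q => pd q (pd c (pd d F))) (fun p q => hF3 a b p) (fun p q => hF3 q c d)
      have hR := pd_sum_sum_mul e x η (fun p q => pd a (pd c (pd p F)))
        (fun p q => pd q (pd b (pd d F))) (fun p q => hF3 a c p) (fun p q => hF3 q b d)
      calc ∑ p, ∑ q, (pd e (pd a (pd b (pd p F))) x * η p q * pd q (pd c (pd d F)) x
              + pd a (pd b (pd p F)) x * η p q * pd e (pd q (pd c (pd d F))) x)
          = ∑ p, ∑ q, η p q * (pd e (pd a (pd b (pd p F))) x * pd q (pd c (pd d F)) x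
              + pd a (pd b (pd p F)) x * pd e (pd q (pd c (pd d F))) x) :=
            Finset.sum_congr rfl fun p _ => Finset.sum_congr rfl fun q _ => by ring
        _ = pd e (fun y => ∑ p, ∑ q,
              η p q * pd a (pd b (pd p F)) y * pd q (pd c (pd d F)) y) x := hL.symm
        _ = pd e (fun y => ∑ p, ∑ q,
              η p q * pd a (pd c (pd p F)) y * pd q (pd b (pd d F)) y) x := by rw [hfun]
        _ = ∑ p, ∑ q, η p q * (pd e (pd a (pd c (pd p F))) x * pd q (pd b (pd d F)) x
              + pd a (pd c (pd p F)) x * pd e (pd q (pd b (pd d F))) x) := hR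
        _ = ∑ p, ∑ q, (pd e (pd a (pd c (pd p F))) x * η p q * pd q (pd b (pd d F)) x
              + pd a (pd c (pd p F)) x * η p q * pd e (pd q (pd b (pd d F))) x) :=
            Finset.sum_congr rfl fun p _ => Finset.sum_congr rfl fun q _ => by ring
    -- assemble hG for core
    have hG : ∀ a b c : Fin n,
        (fun p q r => pd r (pd p (pd q (v k β))) x) a b c
          = ∑ ν, ∑ κ, η ν κ *
            ((fun e p q r => pd e (pd p (pd q (pd r F))) x) c a b κ *
                (fun μ => pd μ (v (k-1) β) x) ν
              + (fun p q r => pd p (pd q (pd r F)) x) a b κ *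
                (∑ μ, ∑ l, η μ l * (fun p q r => pd p (pd q (pd r F)) x) ν c l *
                  (fun μ => if 2 ≤ k then pd μ (v (k-2) β) x else 0) μ)) := by
      intro a b c
      simp only []
      rw [hGq a b c]
      refine Finset.sum_congr rfl fun ν _ => Finset.sum_congr rfl fun κ _ => ?_
      rw [hw2 c ν]
    -- rewrite the goal's first sums into outer-derivative form
    have e1 : (∑ δ, ∑ γ, pd α' (pd β' (pd δ (v k β))) x * η δ γ * pd γ (pd ν' (pd ρ' F)) x)
        = ∑ δ, ∑ γ, pd δ (pd α' (pd β' (v k β))) x * η δ γ * pd γ (pd ν' (pd ρ' F)) x :=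
      Finset.sum_congr rfl fun δ _ => Finset.sum_congr rfl fun γ _ => by
        rw [congrFun (pd3_cyc hvk α' β' δ) x]
    have e2 : (∑ δ, ∑ γ, pd α' (pd ν' (pd δ (v k β))) x * η δ γ * pd γ (pd β' (pd ρ' F)) x)
        = ∑ δ, ∑ γ, pd δ (pd α' (pd ν' (v k β))) x * η δ γ * pd γ (pd β' (pd ρ' F)) x :=
      Finset.sum_congr rfl fun δ _ => Finset.sum_congr rfl fun γ _ => by
        rw [congrFun (pd3_cyc hvk α' ν' δ) x]
    rw [e1, e2]
    exact core η hηsymm (fun p q r => pd p (pd q (pd r F)) x)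
      (fun e p q r => pd e (pd p (pd q (pd r F))) x)
      (fun ν => pd ν (v (k-1) β) x)
      (fun μ => if 2 ≤ k then pd μ (v (k-2) β) x else 0)
      (fun a b c => congrFun (congrArg (pd a) (pd_comm hF b c)) x)
      (fun a b c => congrFun (pd3_cyc hF b c a).symm x)
      (fun a b c d => congrFun (pd4_14 hF a b c d) x)
      (fun a b c d => congrFun (pd4_cyc hF a b c d) x)
      (fun a b c d => hWDVV a b c d x)
      hW4
      (fun p q r => pd r (pd p (pd q (v k β))) x)
      hG α' β' ν' ρ'
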